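/- For the Black–Scholes model, the function S_T(ω) = S₀ exp((r − σ²/2)T + σ√T ω) with ω standard normal satisfies E[e^{−rT}(S_T − P₀)₊] = S₀Φ(−d₁ + σ√T) − P₀ e^{−rT} Φ(−d₁), where d₁ = (log P₀ − log S₀ − (r − σ²/2)T)/(σ√T) and Φ is the standard normal CDF. -/

import Mathlib

/-!
Discounting commutes with the expectation, so it suffices to price the undiscounted payoff.
Since `ω ↦ S₀ e^{A + bω}` is increasing, the payoff `(S₀ e^{A + bω} - P₀)₊` vanishes exactly
below the threshold `d₁` where `S₀ e^{A + b d₁} = P₀`, and the expectation splits into two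
Gaussian integrals over `[d₁, ∞)`. The constant term gives `P₀ Φ(-d₁)`. In the exponential term,
completing the square turns `e^{bω}` times the standard normal density into `e^{b²/2}` times the
density of `N(b, 1)`, whose mass on `[d₁, ∞)` is `Φ(b - d₁)`.
-/

open MeasureTheory Real ProbabilityTheory

noncomputable def stdNormalCDF (x : ℝ) : ℝ :=
  ∫ u in Set.Iic x, (2 * π) ^ (-(1:ℝ)/2) * Real.exp (-u ^ 2 / 2)

open Set
open scoped NNReal

lemma exp_mul_mul_gaussianPDFReal (μ : ℝ) (v : ℝ≥0) (b x : ℝ) :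
    exp (b * x) * gaussianPDFReal μ v x
      = exp (μ * b + v * b ^ 2 / 2) * gaussianPDFReal (μ + v * b) v x := by
  rcases eq_or_ne v 0 with rfl | hv
  · simp
  have hv' : (v : ℝ) ≠ 0 := NNReal.coe_ne_zero.mpr hv
  rw [gaussianPDFReal, gaussianPDFReal, mul_left_comm, mul_left_comm (exp _), ← exp_add, ← exp_add]
  congr 2
  field_simp
  ring

lemma integrable_exp_mul_mul_gaussianPDFReal (μ : ℝ) (v : ℝ≥0) (b : ℝ) :
    Integrable fun x ↦ exp (b * x) * gaussianPDFReal μ v x := by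
  simp only [exp_mul_mul_gaussianPDFReal]
  exact (integrable_gaussianPDFReal _ _).const_mul _

lemma setIntegral_gaussianPDFReal_eq_measureReal (μ : ℝ) {v : ℝ≥0} (hv : v ≠ 0) (s : Set ℝ) :
    ∫ x in s, gaussianPDFReal μ v x = (gaussianReal μ v).real s := by
  rw [measureReal_def, gaussianReal_apply_eq_integral μ hv,
    ENNReal.toReal_ofReal (setIntegral_nonneg_of_ae (ae_of_all _ (gaussianPDFReal_nonneg μ v)))]

lemma stdNormalCDF_eq_measureReal (x : ℝ) : stdNormalCDF x = (gaussianReal 0 1).real (Iic x) := by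
  have hpdf : ∀ u, (2 * π) ^ (-(1 : ℝ) / 2) * exp (-u ^ 2 / 2) = gaussianPDFReal 0 1 u := by
    intro u
    rw [gaussianPDFReal, neg_div, rpow_neg (by positivity), ← sqrt_eq_rpow]
    simp
  simp only [stdNormalCDF, hpdf, setIntegral_gaussianPDFReal_eq_measureReal 0 one_ne_zero]

lemma measureReal_gaussianReal_Ici (μ c : ℝ) :
    (gaussianReal μ 1).real (Ici c) = stdNormalCDF (μ - c) := by
  have hreflect : (gaussianReal μ 1).map (μ - ·) = gaussianReal 0 1 := by
    rw [gaussianReal_map_const_sub, sub_self]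
  rw [stdNormalCDF_eq_measureReal, ← hreflect, map_measureReal_apply (by fun_prop) measurableSet_Iic]
  congr 1
  ext x
  simp

lemma max_exp_sub_eq_indicator {S0 P0 A b c : ℝ} (hS0 : 0 < S0) (hb : 0 < b)
    (hc : S0 * exp (A + b * c) = P0) (ω : ℝ) :
    max (S0 * exp (A + b * ω) - P0) 0
      = (Ici c).indicator (fun ω ↦ S0 * exp (A + b * ω) - P0) ω := by
  subst hc
  by_cases hω : c ≤ ω
  · have hle : S0 * exp (A + b * c) ≤ S0 * exp (A + b * ω) := by gcongr
    rw [indicator_of_mem (mem_Ici.mpr hω), max_eq_left (sub_nonneg.mpr hle)]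
  · have hle : S0 * exp (A + b * ω) ≤ S0 * exp (A + b * c) := by
      gcongr
      exact (not_le.mp hω).le
    rw [indicator_of_notMem (notMem_Ici.mpr (not_le.mp hω)), max_eq_right (sub_nonpos.mpr hle)]

lemma integral_max_exp_sub_gaussianReal {S0 P0 A b c : ℝ} (hS0 : 0 < S0) (hb : 0 < b)
    (hc : S0 * exp (A + b * c) = P0) :
    ∫ ω, max (S0 * exp (A + b * ω) - P0) 0 ∂gaussianReal 0 1
      = S0 * exp (A + b ^ 2 / 2) * stdNormalCDF (b - c) - P0 * stdNormalCDF (-c) := by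
  have hsplit : ∀ ω, gaussianPDFReal 0 1 ω * (S0 * exp (A + b * ω) - P0)
      = S0 * exp A * (exp (b * ω) * gaussianPDFReal 0 1 ω) - P0 * gaussianPDFReal 0 1 ω := by
    intro ω
    rw [exp_add]
    ring
  simp only [integral_gaussianReal_eq_integral_smul one_ne_zero, smul_eq_mul,
    max_exp_sub_eq_indicator hS0 hb hc, ← indicator_mul_right]
  rw [integral_indicator measurableSet_Ici]
  simp only [hsplit]
  rw [integral_sub (((integrable_exp_mul_mul_gaussianPDFReal 0 1 b).const_mul _).integrableOn)
      (((integrable_gaussianPDFReal 0 1).const_mul _).integrableOn),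
    integral_const_mul, integral_const_mul]
  simp only [exp_mul_mul_gaussianPDFReal]
  rw [integral_const_mul, setIntegral_gaussianPDFReal_eq_measureReal _ one_ne_zero,
    setIntegral_gaussianPDFReal_eq_measureReal _ one_ne_zero, measureReal_gaussianReal_Ici,
    measureReal_gaussianReal_Ici]
  simp only [zero_mul, NNReal.coe_one, one_mul, zero_add, zero_sub, exp_add]
  ring

/-- Black–Scholes call option pricing formula: for `ω ~ N(0,1)` and
`S_T = S₀ exp((r − σ²/2)T + σ√T ω)`, the discounted expected payoff
`E[e^{−rT}(S_T − P₀)₊]` equals `S₀Φ(−d₁ + σ√T) − P₀e^{−rT}Φ(−d₁)`. -/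
theorem black_scholes_call_price (S0 r σ T P0 : ℝ)
    (hS0 : 0 < S0) (hσ : 0 < σ) (hT : 0 < T) (hP0 : 0 < P0)
    (d1 : ℝ)
    (hd1 : d1 = (Real.log P0 - Real.log S0 - (r - σ ^ 2 / 2) * T) / (σ * Real.sqrt T)) :
    ∫ ω, Real.exp (-r * T) *
        max (S0 * Real.exp ((r - σ ^ 2 / 2) * T + σ * Real.sqrt T * ω) - P0) 0
        ∂(gaussianReal 0 1)
      = S0 * stdNormalCDF (-d1 + σ * Real.sqrt T)
        - P0 * Real.exp (-r * T) * stdNormalCDF (-d1) := by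
  have hb : 0 < σ * √T := mul_pos hσ (sqrt_pos.mpr hT)
  have hthreshold : S0 * exp ((r - σ ^ 2 / 2) * T + σ * √T * d1) = P0 := by
    rw [hd1, mul_div_cancel₀ _ hb.ne', add_sub_cancel, exp_sub, exp_log hS0, exp_log hP0]
    field_simp
  have hdiscount : exp (-r * T) * exp ((r - σ ^ 2 / 2) * T + (σ * √T) ^ 2 / 2) = 1 := by
    rw [← exp_add, mul_pow, sq_sqrt hT.le, ← exp_zero]
    ring_nf
  rw [integral_const_mul, integral_max_exp_sub_gaussianReal hS0 hb hthreshold, neg_add_eq_sub]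
  linear_combination S0 * stdNormalCDF (σ * √T - d1) * hdiscount
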